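/- Let q_ij, q_ji, π_i, π_j be strictly positive real numbers. Then the following are equivalent: (a) for all p_i, p_j > 0 with p_i q_ij ≠ p_j q_ji, the quotient (ln(p_i/π_i) − ln(p_j/π_j))/(p_i q_ij − p_j q_ji) is strictly positive; (b) π_i q_ij = π_j q_ji. -/

import Mathlib

/-! Under detailed balance the net flux is `πᵢ qᵢⱼ (pᵢ/πᵢ - pⱼ/πⱼ)`, so the coefficient is a positive
multiple of a difference quotient of the strictly increasing `log`. Conversely, at `p = π` the affinity
vanishes, so a nonzero flux there makes the coefficient `0`. -/

open Real

lemma log_sub_log_div_sub_pos {a b : ℝ} (ha : 0 < a) (hb : 0 < b) (hab : a ≠ b) :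
    0 < (log a - log b) / (a - b) := by
  simpa only [slope_def_field] using strictMonoOn_log.slope_pos hb ha hab.symm

lemma mul_sub_mul_eq_of_detailed_balance {𝕜 : Type*} [Field 𝕜] {qij qji πi πj : 𝕜}
    (hπi : πi ≠ 0) (hπj : πj ≠ 0) (hdb : πi * qij = πj * qji) (pi pj : 𝕜) :
    pi * qij - pj * qji = πi * qij * (pi / πi - pj / πj) := by
  field_simp
  linear_combination pj * hdb

theorem stmt_8_general (qij qji πi πj : ℝ) (hqij : 0 < qij)
    (hπi : 0 < πi) (hπj : 0 < πj) :
    (∀ pi pj : ℝ, 0 < pi → 0 < pj → pi * qij ≠ pj * qji →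
      0 < (Real.log (pi / πi) - Real.log (pj / πj)) / (pi * qij - pj * qji)) ↔
    πi * qij = πj * qji := by
  constructor
  · intro h
    by_contra hne
    simpa [div_self hπi.ne', div_self hπj.ne'] using h πi πj hπi hπj hne
  · intro hdb pi pj hpi hpj hne
    have hflux := mul_sub_mul_eq_of_detailed_balance hπi.ne' hπj.ne' hdb pi pj
    have hratio : pi / πi ≠ pj / πj := fun h ↦ hne <| sub_eq_zero.1 <| by simp [hflux, h]
    rw [hflux, div_mul_eq_div_div_swap]
    exact div_pos (log_sub_log_div_sub_pos (by positivity) (by positivity) hratio)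
      (mul_pos hπi hqij)

theorem stmt_8 (qij qji πi πj : ℝ) (hqij : 0 < qij) (hqji : 0 < qji)
    (hπi : 0 < πi) (hπj : 0 < πj) :
    (∀ pi pj : ℝ, 0 < pi → 0 < pj → pi * qij ≠ pj * qji →
      0 < (Real.log (pi / πi) - Real.log (pj / πj)) / (pi * qij - pj * qji)) ↔
    πi * qij = πj * qji :=
  stmt_8_general qij qji πi πj hqij hπi hπj
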